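/- (Theorem 2, comparison of target-risk upper bounds.) Let 𝒳, 𝒴, 𝒬, 𝒵 be finite nonempty sets, let μ_1, …, μ_M (M ≥ 1) be probability measures on 𝒳 × 𝒴, let f₂ : 𝒳 → 𝒬 and k : 𝒬 → 𝒵, and set f₁ = k ∘ f₂. For each i, let ξ_i be the pushforward of μ_i under (x, y) ↦ (f₂(x), y), and let ν_i be the pushforward of μ_i under (x, y) ↦ (f₁(x), y), and suppose ν_1 = ⋯ = ν_M. Then for every real number C, the upper bound on the target risk of the hypothesis built on the domain-invariant features Z, namely sup ε_T(h₁) = Σ_{i=1}^M H_{ν_i}(Y | Z) + C, and the upper bound for the hypothesis built on the intermediate features Q, namely sup ε_T(h₂) = Σ_{i=1}^M H_{ξ_i}(Y | Q) + C, satisfy sup ε_T(h₁) − sup ε_T(h₂) ≥ σ and in particular sup ε_T(h₁) ≥ sup ε_T(h₂), where σ = Σ_{i=1}^M ( I_{ξ_i}(Q; Y) − min_{1≤j≤M} I_{ξ_j}(Q; Y) ) ≥ 0. -/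

import Mathlib

open scoped ENNReal

/-- A probability mass function on a finite type, given as a real-valued function. -/
def IsPMF {α : Type*} [Fintype α] (p : α → ℝ) : Prop :=
  (∀ a, 0 ≤ p a) ∧ ∑ a, p a = 1

/-- First marginal of a joint distribution on `X × Y`. -/
noncomputable def marg1 {X Y : Type*} [Fintype Y] (μ : X × Y → ℝ) (x : X) : ℝ :=
  ∑ y, μ (x, y)

/-- Second marginal of a joint distribution on `X × Y`. -/
noncomputable def marg2 {X Y : Type*} [Fintype X] (μ : X × Y → ℝ) (y : Y) : ℝ :=
  ∑ x, μ (x, y)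

/-- Mutual information `I_μ(X; Y)` of a joint distribution `μ` on `X × Y`;
terms with `μ p = 0` vanish since `0 * log _ = 0` (and `Real.log 0 = 0`). -/
noncomputable def mutualInfo {X Y : Type*} [Fintype X] [Fintype Y] (μ : X × Y → ℝ) : ℝ :=
  ∑ p : X × Y, μ p * Real.log (μ p / (marg1 μ p.1 * marg2 μ p.2))

/-- Entropy `H_μ(Y)` of the second marginal (with the convention `0 * log 0 = 0`). -/
noncomputable def entropy2 {X Y : Type*} [Fintype X] [Fintype Y] (μ : X × Y → ℝ) : ℝ :=
  -∑ y, marg2 μ y * Real.log (marg2 μ y)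

/-- Conditional entropy `H_μ(Y | X) = H_μ(Y) - I_μ(X; Y)`. -/
noncomputable def condEntropy2 {X Y : Type*} [Fintype X] [Fintype Y] (μ : X × Y → ℝ) : ℝ :=
  entropy2 μ - mutualInfo μ

/-- `-log t`, valued in `[0, ∞]`, with `-log 0 = ∞`. -/
noncomputable def negLog (t : ℝ) : ℝ≥0∞ :=
  if t = 0 then ⊤ else ENNReal.ofReal (-Real.log t)

/-- Expected cross-entropy risk of a stochastic classifier `g : X → Δ(Y)` under a
joint distribution `μ` on `X × Y`, valued in `[0, ∞]`. -/
noncomputable def ceRisk {X Y : Type*} [Fintype X] [Fintype Y]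
    (μ : X × Y → ℝ) (g : X → Y → ℝ) : ℝ≥0∞ :=
  ∑ p : X × Y, ENNReal.ofReal (μ p) * negLog (g p.1 p.2)

/-- Pushforward of a joint distribution `μ` on `X × Y` under `(x, y) ↦ (f x, y)`:
the joint law of `(f(X), Y)`. -/
noncomputable def push {X Y Z : Type*} [Fintype X] [DecidableEq Z]
    (f : X → Z) (μ : X × Y → ℝ) : Z × Y → ℝ :=
  fun p => ∑ x ∈ Finset.univ.filter (fun x => f x = p.1), μ (x, p.2)

/-! Merging features loses information about `Y` but not the law of `Y`. Pushing a joint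
law `ξ` on `Q × Y` forward along `k` leaves the marginal of `Y` unchanged and cannot increase
the mutual information (data processing): `I(ξ) - I(ν)` is the relative entropy of `ξ`
against `m(q, y) = ξ(q) ν(y | k q)`, which is nonnegative by Gibbs' inequality since `m` has
total mass at most that of `ξ`. So `H_ν(Y | Z) - H_ξ(Y | Q) = I_ξ(Q; Y) - I_ν(Z; Y)` in each
domain, and because `ν_i` is the same in every domain, `I_{ν_i}(Z; Y) ≤ min_j I_{ξ_j}(Q; Y)`. -/

section Marginals

variable {X Y : Type*} {μ : X × Y → ℝ}

lemma apply_le_marg1 [Fintype Y] (hμ : 0 ≤ μ) (x : X) (y : Y) : μ (x, y) ≤ marg1 μ x :=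
  Finset.single_le_sum (f := fun y' => μ (x, y')) (fun _ _ => hμ _) (Finset.mem_univ y)

lemma apply_le_marg2 [Fintype X] (hμ : 0 ≤ μ) (x : X) (y : Y) : μ (x, y) ≤ marg2 μ y :=
  Finset.single_le_sum (f := fun x' => μ (x', y)) (fun _ _ => hμ _) (Finset.mem_univ x)

lemma marg1_nonneg [Fintype Y] (hμ : 0 ≤ μ) (x : X) : 0 ≤ marg1 μ x :=
  Finset.sum_nonneg fun _ _ => hμ _

lemma sum_marg1 [Fintype X] [Fintype Y] (μ : X × Y → ℝ) : ∑ x, marg1 μ x = ∑ p, μ p :=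
  (Fintype.sum_prod_type μ).symm

end Marginals

lemma sub_le_mul_log_div {p m : ℝ} (hp : 0 ≤ p) (hm : 0 ≤ m) (hpm : 0 < p → 0 < m) :
    p - m ≤ p * Real.log (p / m) := by
  rcases hp.eq_or_lt with rfl | hp
  · simpa using hm
  have key := Real.one_sub_inv_le_log_of_pos (div_pos hp (hpm hp))
  rw [inv_div] at key
  calc p - m = p * (1 - m / p) := by field_simp
    _ ≤ p * Real.log (p / m) := mul_le_mul_of_nonneg_left key hp.le

lemma log_div_mul_sub_log_div_mul {a b c d e : ℝ} (ha : 0 < a) (hb : 0 < b) (hc : 0 < c)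
    (hd : 0 < d) (he : 0 < e) :
    Real.log (a / (b * c)) - Real.log (d / (e * c)) = Real.log (a / (b * (d / e))) := by
  rw [← Real.log_div (by positivity) (by positivity)]
  congr 1
  field_simp

section Push

variable {X Y Q Z : Type*} [Fintype Q] [DecidableEq Z]

lemma push_nonneg {ξ : Q × Y → ℝ} (hξ : 0 ≤ ξ) (f : Q → Z) : 0 ≤ push f ξ :=
  fun _ => Finset.sum_nonneg fun _ _ => hξ _

lemma apply_le_push {ξ : Q × Y → ℝ} (hξ : 0 ≤ ξ) (f : Q → Z) (q : Q) (y : Y) :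
    ξ (q, y) ≤ push f ξ (f q, y) :=
  Finset.single_le_sum (f := fun q' => ξ (q', y)) (fun _ _ => hξ _) (by simp)

lemma sum_push_mul [Fintype Y] [Fintype Z] (f : Q → Z) (ξ : Q × Y → ℝ) (g : Z × Y → ℝ) :
    ∑ p, push f ξ p * g p = ∑ p, ξ p * g (f p.1, p.2) := by
  simp only [push, Finset.sum_mul, Fintype.sum_prod_type]
  rw [Finset.sum_comm, Finset.sum_comm (γ := Q)]
  refine Finset.sum_congr rfl fun y _ => ?_
  rw [← Finset.sum_fiberwise Finset.univ f (fun q => ξ (q, y) * g (f q, y))]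
  refine Finset.sum_congr rfl fun z _ => Finset.sum_congr rfl fun q hq => ?_
  rw [(Finset.mem_filter.1 hq).2]

lemma marg2_push [Fintype Z] (f : Q → Z) (ξ : Q × Y → ℝ) : marg2 (push f ξ) = marg2 ξ :=
  funext fun y => Finset.sum_fiberwise Finset.univ f fun q => ξ (q, y)

lemma entropy2_push [Fintype Y] [Fintype Z] (f : Q → Z) (ξ : Q × Y → ℝ) :
    entropy2 (push f ξ) = entropy2 ξ := by
  simp only [entropy2, marg2_push]

lemma push_comp [Fintype X] [DecidableEq Q] (f : X → Q) (g : Q → Z) (μ : X × Y → ℝ) :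
    push (g ∘ f) μ = push g (push f μ) := by
  funext p
  simp only [push, Function.comp_apply]
  rw [← Finset.sum_fiberwise_of_maps_to (g := f) (t := Finset.univ.filter fun q => g q = p.1)
    (by simp)]
  refine Finset.sum_congr rfl fun q hq => Finset.sum_congr ?_ fun _ _ => rfl
  ext x
  simp only [Finset.mem_filter, Finset.mem_univ, true_and] at hq ⊢
  constructor
  · exact And.right
  · rintro rfl; exact ⟨hq, rfl⟩

end Push

theorem mutualInfo_push_le {Y Q Z : Type*} [Fintype Y] [Fintype Q] [Fintype Z] [DecidableEq Z]
    {ξ : Q × Y → ℝ} (hξ : 0 ≤ ξ) (f : Q → Z) :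
    mutualInfo (push f ξ) ≤ mutualInfo ξ := by
  set ν := push f ξ
  have hν : 0 ≤ ν := push_nonneg hξ f
  set m : Q × Y → ℝ := fun p => marg1 ξ p.1 * (ν (f p.1, p.2) / marg1 ν (f p.1))
  have hm_nonneg : 0 ≤ m := fun p =>
    mul_nonneg (marg1_nonneg hξ _) (div_nonneg (hν _) (marg1_nonneg hν _))
  have hm_pos : ∀ p, 0 < ξ p → 0 < m p := fun ⟨q, y⟩ hp => by
    have hν_pos := hp.trans_le (apply_le_push hξ f q y)
    exact mul_pos (hp.trans_le (apply_le_marg1 hξ q y))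
      (div_pos hν_pos (hν_pos.trans_le (apply_le_marg1 hν _ y)))
  have hm_sum : ∑ p, m p ≤ ∑ p, ξ p := by
    rw [← sum_marg1 ξ, Fintype.sum_prod_type]
    refine Finset.sum_le_sum fun q _ => ?_
    simp only [m]
    rw [← Finset.mul_sum, ← Finset.sum_div]
    exact mul_le_of_le_one_right (marg1_nonneg hξ q) (div_self_le_one _)
  have hgap : mutualInfo ξ - mutualInfo ν = ∑ p, ξ p * Real.log (ξ p / m p) := by
    rw [mutualInfo, mutualInfo, sum_push_mul, ← Finset.sum_sub_distrib]
    refine Finset.sum_congr rfl fun ⟨q, y⟩ _ => ?_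
    rcases (hξ (q, y)).eq_or_lt with hp | hp
    · simp [← hp]
    have hν_pos := hp.trans_le (apply_le_push hξ f q y)
    rw [← mul_sub, marg2_push, log_div_mul_sub_log_div_mul hp
      (hp.trans_le (apply_le_marg1 hξ q y)) (hp.trans_le (apply_le_marg2 hξ q y)) hν_pos
      (hν_pos.trans_le (apply_le_marg1 hν _ y))]
  rw [← sub_nonneg, hgap]
  calc 0 ≤ ∑ p, (ξ p - m p) := by rw [Finset.sum_sub_distrib]; linarith
    _ ≤ ∑ p, ξ p * Real.log (ξ p / m p) :=
      Finset.sum_le_sum fun p _ => sub_le_mul_log_div (hξ p) (hm_nonneg p) (hm_pos p)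

lemma condEntropy2_push_sub {Y Q Z : Type*} [Fintype Y] [Fintype Q] [Fintype Z] [DecidableEq Z]
    (f : Q → Z) (ξ : Q × Y → ℝ) :
    condEntropy2 (push f ξ) - condEntropy2 ξ = mutualInfo ξ - mutualInfo (push f ξ) := by
  rw [condEntropy2, condEntropy2, entropy2_push]
  ring

theorem theorem2_target_risk_bounds_general
    {X Y Q Z : Type*} [Fintype X] [Fintype Y] [Fintype Q] [Fintype Z]
    [DecidableEq Q] [DecidableEq Z]
    (M : ℕ) (hM : 1 ≤ M) (μ : Fin M → X × Y → ℝ) (hμ : ∀ i, IsPMF (μ i))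
    (f₂ : X → Q) (k : Q → Z)
    (hinv : ∀ i j, push (k ∘ f₂) (μ i) = push (k ∘ f₂) (μ j)) :
    ∀ C : ℝ,
      (∑ i, (mutualInfo (push f₂ (μ i))
          - Finset.univ.inf' ⟨⟨0, hM⟩, Finset.mem_univ _⟩
              (fun j => mutualInfo (push f₂ (μ j))))
        ≤ (∑ i, condEntropy2 (push (k ∘ f₂) (μ i)) + C)
          - (∑ i, condEntropy2 (push f₂ (μ i)) + C))
      ∧ (∑ i, condEntropy2 (push f₂ (μ i)) + C
          ≤ ∑ i, condEntropy2 (push (k ∘ f₂) (μ i)) + C)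
      ∧ 0 ≤ ∑ i, (mutualInfo (push f₂ (μ i))
          - Finset.univ.inf' ⟨⟨0, hM⟩, Finset.mem_univ _⟩
              (fun j => mutualInfo (push f₂ (μ j)))) := by
  intro C
  set minInfo := Finset.univ.inf' ⟨⟨0, hM⟩, Finset.mem_univ _⟩
    (fun j => mutualInfo (push f₂ (μ j)))
  have hgap : ∀ i, mutualInfo (push f₂ (μ i)) - minInfo
      ≤ condEntropy2 (push (k ∘ f₂) (μ i)) - condEntropy2 (push f₂ (μ i)) := fun i => by
    have hmin : mutualInfo (push (k ∘ f₂) (μ i)) ≤ minInfo := Finset.le_inf' _ _ fun j _ => by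
      rw [hinv i j, push_comp]
      exact mutualInfo_push_le (push_nonneg (hμ j).1 f₂) k
    rw [push_comp] at hmin ⊢
    rw [condEntropy2_push_sub]
    linarith
  have hσ_nonneg : 0 ≤ ∑ i, (mutualInfo (push f₂ (μ i)) - minInfo) :=
    Finset.sum_nonneg fun i _ => sub_nonneg.2 (Finset.inf'_le _ (Finset.mem_univ i))
  have hσ_le : ∑ i, (mutualInfo (push f₂ (μ i)) - minInfo)
      ≤ (∑ i, condEntropy2 (push (k ∘ f₂) (μ i)) + C)
        - (∑ i, condEntropy2 (push f₂ (μ i)) + C) := by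
    rw [add_sub_add_right_eq_sub, ← Finset.sum_sub_distrib]
    exact Finset.sum_le_sum fun i _ => hgap i
  exact ⟨hσ_le, by linarith, hσ_nonneg⟩

/-- Theorem 2, comparison of target-risk upper bounds: with the feature-extraction
process factoring as `X → Q → Z` (`f₁ = k ∘ f₂`) and domain-invariant feature laws
`ν_1 = ⋯ = ν_M`, for every real `C` (the common divergence-plus-complexity term in
the Ben-David et al. bound), the target-risk upper bounds
`sup ε_T(h₁) = ∑ i, H_{ν_i}(Y | Z) + C` and `sup ε_T(h₂) = ∑ i, H_{ξ_i}(Y | Q) + C`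
satisfy `sup ε_T(h₁) - sup ε_T(h₂) ≥ σ ≥ 0`, and in particular
`sup ε_T(h₂) ≤ sup ε_T(h₁)`. -/
theorem theorem2_target_risk_bounds
    {X Y Q Z : Type*} [Fintype X] [Fintype Y] [Fintype Q] [Fintype Z]
    [Nonempty X] [Nonempty Y] [Nonempty Q] [Nonempty Z]
    [DecidableEq Q] [DecidableEq Z]
    (M : ℕ) (hM : 1 ≤ M) (μ : Fin M → X × Y → ℝ) (hμ : ∀ i, IsPMF (μ i))
    (f₂ : X → Q) (k : Q → Z)
    (hinv : ∀ i j, push (k ∘ f₂) (μ i) = push (k ∘ f₂) (μ j)) :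
    ∀ C : ℝ,
      (∑ i, (mutualInfo (push f₂ (μ i))
          - Finset.univ.inf' ⟨⟨0, hM⟩, Finset.mem_univ _⟩
              (fun j => mutualInfo (push f₂ (μ j))))
        ≤ (∑ i, condEntropy2 (push (k ∘ f₂) (μ i)) + C)
          - (∑ i, condEntropy2 (push f₂ (μ i)) + C))
      ∧ (∑ i, condEntropy2 (push f₂ (μ i)) + C
          ≤ ∑ i, condEntropy2 (push (k ∘ f₂) (μ i)) + C)
      ∧ 0 ≤ ∑ i, (mutualInfo (push f₂ (μ i))
          - Finset.univ.inf' ⟨⟨0, hM⟩, Finset.mem_univ _⟩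
              (fun j => mutualInfo (push f₂ (μ j)))) :=
  theorem2_target_risk_bounds_general M hM μ hμ f₂ k hinv
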